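/- Let x_1, ..., x_k be distinct points in R^d with k >= 2, let S = conv{x_1, ..., x_k} denote their convex hull, and let alpha > 1 be a real number. Then for every vector v in R^d there exists an index i in {1, ..., k} such that dist(alpha * x_i + v, S) >= ((alpha - 1)/2) * diam(S), where dist(z, S) = inf_{s in S} ||z - s|| and diam(S) = sup_{p, q in S} ||p - q||. -/

import Mathlib

/-! Choose vertices `x i`, `x j` realising the diameter of the vertex set, which is also the
diameter of `S`. Their images `α • x i + v` and `α • x j + v` are `α * diam S` apart, while going
from one to the other through `S` costs at most their two distances to `S` plus `diam S`. Hence the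
two distances to `S` add up to at least `(α - 1) * diam S`, and the larger one is at least half. -/

open Bornology Metric Set

section PseudoMetricSpace

variable {E : Type*} [PseudoMetricSpace E]

theorem Metric.dist_le_infDist_add_diam_add_infDist {S : Set E} (hS : IsBounded S)
    (hne : S.Nonempty) (y z : E) : dist y z ≤ infDist y S + diam S + infDist z S := by
  have h : dist y z - diam S - infDist z S ≤ infDist y S := by
    rw [le_infDist hne]
    intro s hs
    linarith [dist_triangle y s z, dist_comm s z, dist_le_infDist_add_diam (x := z) hS hs]
  linarith

theorem Metric.exists_diam_range_le_dist {ι : Type*} [Finite ι] [Nonempty ι] (x : ι → E) :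
    ∃ i j, diam (range x) ≤ dist (x i) (x j) := by
  obtain ⟨⟨i, j⟩, hmax⟩ := Finite.exists_max fun p : ι × ι => dist (x p.1) (x p.2)
  refine ⟨i, j, diam_le_of_forall_dist_le dist_nonneg ?_⟩
  rintro _ ⟨a, rfl⟩ _ ⟨b, rfl⟩
  exact hmax (a, b)

end PseudoMetricSpace

theorem exists_le_infDist_smul_add_convexHull {E : Type*} [SeminormedAddCommGroup E]
    [NormedSpace ℝ E] {ι : Type*} [Finite ι] [Nonempty ι] (x : ι → E) (α : ℝ) (v : E) :
    ∃ i, (α - 1) / 2 * diam (convexHull ℝ (range x)) ≤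
      infDist (α • x i + v) (convexHull ℝ (range x)) := by
  set S := convexHull ℝ (range x)
  obtain ⟨i, j, hij⟩ := exists_diam_range_le_dist x
  have hdiam : diam S = diam (range x) := convexHull_diam _
  have hbdd : IsBounded S := isBounded_convexHull.2 (finite_range x).isBounded
  have hne : S.Nonempty := (range_nonempty x).mono (subset_convexHull ℝ _)
  have hscale : α * diam S ≤ dist (α • x i + v) (α • x j + v) := by
    rw [dist_add_right, dist_smul₀, Real.norm_eq_abs, hdiam]
    calc α * diam (range x) ≤ |α| * diam (range x) :=
          mul_le_mul_of_nonneg_right (le_abs_self α) diam_nonneg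
      _ ≤ |α| * dist (x i) (x j) := by gcongr
  have htri := dist_le_infDist_add_diam_add_infDist hbdd hne (α • x i + v) (α • x j + v)
  rcases le_total (infDist (α • x i + v) S) (infDist (α • x j + v) S) with h | h
  · exact ⟨j, by linarith⟩
  · exact ⟨i, by linarith⟩

theorem stmt_0_general (d k : ℕ) (hk : 2 ≤ k)
    (x : Fin k → EuclideanSpace ℝ (Fin d))
    (S : Set (EuclideanSpace ℝ (Fin d))) (hS : S = convexHull ℝ (Set.range x))
    (α : ℝ) :
    ∀ v : EuclideanSpace ℝ (Fin d), ∃ i : Fin k,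
      ((α - 1) / 2) * Metric.diam S ≤ Metric.infDist (α • x i + v) S := by
  intro v
  have : Nonempty (Fin k) := ⟨⟨0, by omega⟩⟩
  subst hS
  exact exists_le_infDist_smul_add_convexHull x α v

/-- **Lemma B.3 (convex-hull separation).**
Let `x 1, ..., x k` be distinct points in `ℝ^d` with `k ≥ 2`, let
`S = conv {x 1, ..., x k}`, and let `α > 1`. Then for every `v ∈ ℝ^d` there is an
index `i` with `dist (α • x i + v, S) ≥ ((α - 1)/2) * diam S`. -/
theorem stmt_0 (d k : ℕ) (hk : 2 ≤ k)
    (x : Fin k → EuclideanSpace ℝ (Fin d)) (hx : Function.Injective x)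
    (S : Set (EuclideanSpace ℝ (Fin d))) (hS : S = convexHull ℝ (Set.range x))
    (α : ℝ) (hα : 1 < α) :
    ∀ v : EuclideanSpace ℝ (Fin d), ∃ i : Fin k,
      ((α - 1) / 2) * Metric.diam S ≤ Metric.infDist (α • x i + v) S :=
  stmt_0_general d k hk x S hS α
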